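/- Fix m ≥ 1 and a ℚ-vector space M. With C_k and ρ_k as above (alternating-sign face maps on functions from k-subsets of {1,…,m} to M), define h_k : C_k → C_{k-1} by h(ω)_J = Σ_{i ∉ J} (-1)^{|{r ∈ J : r > i}|} ω_{J ∪ {i}}. Then for every 1 ≤ k ≤ m-1, the complex is exact at C_k: ker(ρ_k) = im(ρ_{k-1}). Moreover ker(ρ_0) consists exactly of the constant functions arising from a single element of M placed compatibly, i.e., ker ρ_0 ≅ M embedded diagonally. -/

import Mathlib

/-- The ℚ-vector space of functions from k-element subsets of {1,…,m} to M. -/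
def SimpCochain (m : ℕ) (M : Type*) (k : ℕ) : Type _ :=
  {s : Finset (Fin m) // s.card = k} → M

/-- The alternating-sign coboundary map ρ_k : C_k → C_{k+1},
ρ(ω)_I = Σ_{j ∈ I} (-1)^{pos(j,I)} ω_{I \ {j}}. -/
def simpRho {m : ℕ} {M : Type*} [AddCommGroup M] (k : ℕ)
    (ω : SimpCochain m M k) : SimpCochain m M (k + 1) := fun I =>
  ∑ j ∈ I.1.attach,
    ((-1 : ℤ) ^ ((I.1.filter (fun r => r < j.1)).card)) •
      ω ⟨I.1.erase j.1, by simp [Finset.card_erase_of_mem j.2, I.2]⟩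

/-- The homotopy operator h_k : C_k → C_{k-1},
h(ω)_J = Σ_{i ∉ J} (-1)^{|{r ∈ J : r > i}|} ω_{J ∪ {i}}. -/
def simpH {m : ℕ} {M : Type*} [AddCommGroup M] (k : ℕ)
    (ω : SimpCochain m M (k + 1)) : SimpCochain m M k := fun J =>
  ∑ i ∈ (J.1ᶜ).attach,
    ((-1 : ℤ) ^ ((J.1.filter (fun r => i.1 < r)).card)) •
      ω ⟨insert i.1 J.1, by
        rw [Finset.card_insert_of_notMem (Finset.mem_compl.mp i.2), J.2]⟩

/-!
Coning off the least vertex `v` is a contracting homotopy: `(h ω) J = ω (J ∪ {v})` for `v ∉ J`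
(and `0` otherwise) satisfies `ρ h + h ρ = id` in positive degrees, because `v` precedes every
other vertex, so inserting it shifts each sign in `ρ` by exactly one. Thus every closed cochain of
positive degree is exact. Conversely `ρ ρ = 0`, since the two orders of deleting a pair of
vertices carry opposite signs. In degree one, the image of `ρ₀` consists of the constant
functions.
-/

theorem sum_sum_erase_eq_zero_of_antisymm {ι G : Type*} [DecidableEq ι] [AddCommGroup G]
    (s : Finset ι) (f : ι → ι → G) (hf : ∀ i ∈ s, ∀ j ∈ s, i ≠ j → f j i = -f i j) :
    ∑ i ∈ s, ∑ j ∈ s.erase i, f i j = 0 := by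
  rw [Finset.sum_sigma']
  refine Finset.sum_involution (fun p _ => ⟨p.2, p.1⟩) ?_ ?_ ?_ (fun _ _ => rfl)
  · rintro ⟨i, j⟩ hp
    obtain ⟨hi, hji, hj⟩ : i ∈ s ∧ j ≠ i ∧ j ∈ s := by simpa using hp
    simp [hf i hi j hj hji.symm]
  · rintro ⟨i, j⟩ hp _ h
    obtain ⟨-, hji, -⟩ : i ∈ s ∧ j ≠ i ∧ j ∈ s := by simpa using hp
    exact hji (congrArg Sigma.fst h)
  · rintro ⟨i, j⟩ hp
    obtain ⟨hi, hji, hj⟩ : i ∈ s ∧ j ≠ i ∧ j ∈ s := by simpa using hp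
    simpa using ⟨hj, hji.symm, hi⟩

section Order

variable {α : Type*} [LinearOrder α]

lemma card_filter_lt_erase_of_lt {s : Finset α} {i j : α} (hi : i ∈ s) (hij : i < j) :
    ((s.erase i).filter (· < j)).card + 1 = (s.filter (· < j)).card := by
  rw [Finset.filter_erase, Finset.card_erase_add_one (by simpa using ⟨hi, hij⟩)]

lemma card_filter_lt_erase_of_not_lt {s : Finset α} {i j : α} (h : ¬ j < i) :
    ((s.erase j).filter (· < i)).card = (s.filter (· < i)).card := by
  rw [Finset.filter_erase, Finset.erase_eq_of_notMem (by simp [h])]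

lemma card_filter_lt_insert_of_lt {s : Finset α} {i j : α} (hi : i ∉ s) (hij : i < j) :
    ((insert i s).filter (· < j)).card = (s.filter (· < j)).card + 1 := by
  rw [Finset.filter_insert, if_pos hij, Finset.card_insert_of_notMem (by simp [hi])]

end Order

namespace SimpCochain

variable {m : ℕ} {M : Type*} [AddCommGroup M]

def extend {k : ℕ} (ω : SimpCochain m M k) (s : Finset (Fin m)) : M :=
  if h : s.card = k then ω ⟨s, h⟩ else 0

lemma extend_of_card_eq {k : ℕ} (ω : SimpCochain m M k) {s : Finset (Fin m)} (h : s.card = k) :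
    ω.extend s = ω ⟨s, h⟩ :=
  dif_pos h

lemma extend_of_card_ne {k : ℕ} (ω : SimpCochain m M k) {s : Finset (Fin m)} (h : s.card ≠ k) :
    ω.extend s = 0 :=
  dif_neg h

-- On `J ∋ v` this vanishes: `insert v J = J` has the wrong cardinality for `ω.extend`.
def cone (v : Fin m) {k : ℕ} (ω : SimpCochain m M (k + 1)) : SimpCochain m M k :=
  fun J => ω.extend (insert v J.1)

end SimpCochain

open SimpCochain

section Homotopy

variable {m : ℕ} {M : Type*} [AddCommGroup M]

lemma extend_simpRho {k : ℕ} (ω : SimpCochain m M k) {s : Finset (Fin m)} (hs : s.card = k + 1) :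
    (simpRho k ω).extend s =
      ∑ j ∈ s, ((-1 : ℤ) ^ (s.filter (· < j)).card) • ω.extend (s.erase j) := by
  rw [extend_of_card_eq _ hs, simpRho,
    ← Finset.sum_attach s (fun j => ((-1 : ℤ) ^ (s.filter (· < j)).card) • ω.extend (s.erase j))]
  refine Finset.sum_congr rfl fun j _ => ?_
  rw [extend_of_card_eq]

lemma simpRho_apply {k : ℕ} (ω : SimpCochain m M k) (I : {s : Finset (Fin m) // s.card = k + 1}) :
    simpRho k ω I = ∑ j ∈ I.1, ((-1 : ℤ) ^ (I.1.filter (· < j)).card) • ω.extend (I.1.erase j) := by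
  rw [← extend_simpRho ω I.2, extend_of_card_eq]

lemma extend_cone (v : Fin m) {k : ℕ} (ω : SimpCochain m M (k + 1)) {s : Finset (Fin m)}
    (hs : s.card = k) : (cone v ω).extend s = ω.extend (insert v s) :=
  extend_of_card_eq _ hs

theorem simpRho_simpRho (k : ℕ) (η : SimpCochain m M k) :
    simpRho (k + 1) (simpRho k η) = fun _ => 0 := by
  funext ⟨I, hI⟩
  set f : Fin m → Fin m → M := fun i j =>
    ((-1 : ℤ) ^ (I.filter (· < i)).card * (-1) ^ ((I.erase i).filter (· < j)).card) •
      η.extend ((I.erase i).erase j)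
  have hanti : ∀ i ∈ I, ∀ j ∈ I, i < j → f j i = -f i j := fun i hi j _ hij => by
    simp only [f, ← card_filter_lt_erase_of_lt hi hij, card_filter_lt_erase_of_not_lt hij.not_gt,
      Finset.erase_right_comm (a := i), pow_succ, ← neg_smul]
    congr 1
    ring
  rw [simpRho_apply, ← sum_sum_erase_eq_zero_of_antisymm I f fun i hi j hj hij =>
    hij.lt_or_gt.elim (hanti i hi j hj) fun hji => by rw [hanti j hj i hi hji, neg_neg]]
  refine Finset.sum_congr rfl fun i hi => ?_
  rw [extend_simpRho _ (by rw [Finset.card_erase_of_mem hi, hI]; rfl), Finset.smul_sum]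
  simp only [f, smul_smul]

theorem simpRho_cone_add_cone_simpRho {v : Fin m} (hv : IsBot v) {k : ℕ}
    (ω : SimpCochain m M (k + 1)) (I : {s : Finset (Fin m) // s.card = k + 1}) :
    simpRho k (cone v ω) I + cone v (simpRho (k + 1) ω) I = ω I := by
  obtain ⟨I, hI⟩ := I
  have hcone : ∀ j ∈ I, (cone v ω).extend (I.erase j) = ω.extend (insert v (I.erase j)) :=
    fun j hj => extend_cone v ω (by rw [Finset.card_erase_of_mem hj, hI]; rfl)
  have hpos : ∀ s : Finset (Fin m), (s.filter (· < v)).card = 0 := fun s => by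
    simpa using fun r _ => hv r
  rw [simpRho_apply, Finset.sum_congr rfl fun j hj => by rw [hcone j hj], cone]
  dsimp only
  by_cases hvI : v ∈ I
  · rw [Finset.insert_eq_of_mem hvI, extend_of_card_ne _ (by omega), add_zero,
      Finset.sum_eq_single_of_mem v hvI, hpos, pow_zero, one_smul, Finset.insert_erase hvI,
      extend_of_card_eq _ hI]
    intro j hj hjv
    rw [Finset.insert_eq_of_mem (Finset.mem_erase.2 ⟨Ne.symm hjv, hvI⟩),
      extend_of_card_ne _ (by rw [Finset.card_erase_of_mem hj]; omega), smul_zero]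
  · rw [extend_simpRho _ (by rw [Finset.card_insert_of_notMem hvI, hI]), Finset.sum_insert hvI,
      hpos, pow_zero, one_smul, Finset.erase_insert hvI, extend_of_card_eq _ hI, add_left_comm,
      ← Finset.sum_add_distrib, Finset.sum_eq_zero, add_zero]
    intro j hj
    have hvj : v < j := lt_of_le_of_ne (hv j) (fun h => hvI (h ▸ hj))
    rw [Finset.erase_insert_of_ne hvj.ne, card_filter_lt_insert_of_lt hvI hvj, pow_succ, mul_neg_one,
      neg_smul, add_neg_cancel]

theorem simpRho_eq_zero_iff_exists_simpRho_eq {v : Fin m} (hv : IsBot v) (k : ℕ)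
    (ω : SimpCochain m M (k + 1)) :
    (simpRho (k + 1) ω = fun _ => 0) ↔ ∃ η : SimpCochain m M k, simpRho k η = ω := by
  constructor
  · intro hω
    refine ⟨cone v ω, funext fun I => ?_⟩
    rw [← simpRho_cone_add_cone_simpRho hv ω I, cone, hω]
    simp only [extend, dite_eq_ite, ite_self, add_zero]
  · rintro ⟨η, rfl⟩
    exact simpRho_simpRho k η

lemma exists_simpRho_zero_eq_iff (ω : SimpCochain m M 1) :
    (∃ η : SimpCochain m M 0, simpRho 0 η = ω) ↔ ∃ a : M, ∀ I, ω I = a := by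
  have hρ : ∀ (η : SimpCochain m M 0) I, simpRho 0 η I = η ⟨∅, rfl⟩ := fun η ⟨I, hI⟩ => by
    obtain ⟨i, rfl⟩ := Finset.card_eq_one.1 hI
    simp [simpRho_apply, extend, Finset.filter_singleton]
  constructor
  · rintro ⟨η, rfl⟩
    exact ⟨η ⟨∅, rfl⟩, hρ η⟩
  · rintro ⟨a, ha⟩
    exact ⟨fun _ => a, funext fun I => (hρ _ I).trans (ha I).symm⟩

end Homotopy

theorem stmt13_general {m : ℕ} (hm : 1 ≤ m) {M : Type*} [AddCommGroup M] :
    (∀ j : ℕ, 1 ≤ j + 1 → j + 1 ≤ m - 1 → ∀ ω : SimpCochain m M (j + 1),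
      (simpRho (j + 1) ω = fun _ => (0 : M)) ↔ ∃ η : SimpCochain m M j, simpRho j η = ω) ∧
    (∀ ω : SimpCochain m M 1,
      (simpRho 1 ω = fun _ => (0 : M)) ↔ ∃ a : M, ∀ I, ω I = a) := by
  have hbot : IsBot (⟨0, hm⟩ : Fin m) := fun r => Nat.zero_le r
  exact ⟨fun j _ _ => simpRho_eq_zero_iff_exists_simpRho_eq hbot j,
    fun ω => (simpRho_eq_zero_iff_exists_simpRho_eq hbot 0 ω).trans (exists_simpRho_zero_eq_iff ω)⟩

/-- Exactness of the simplicial cochain complex in intermediate degrees, and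
identification of the kernel at the first level with the diagonally embedded
copy of M (the constant functions). -/
theorem stmt13 {m : ℕ} (hm : 1 ≤ m) {M : Type*} [AddCommGroup M] [Module ℚ M] :
    (∀ j : ℕ, 1 ≤ j + 1 → j + 1 ≤ m - 1 → ∀ ω : SimpCochain m M (j + 1),
      (simpRho (j + 1) ω = fun _ => (0 : M)) ↔ ∃ η : SimpCochain m M j, simpRho j η = ω) ∧
    (∀ ω : SimpCochain m M 1,
      (simpRho 1 ω = fun _ => (0 : M)) ↔ ∃ a : M, ∀ I, ω I = a) :=
  stmt13_general hm
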